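/- arXiv:2205.03965 — 3 statements merged into one kernel-verified Lean document; each statement's English description precedes it below -/
import Mathlib

section
/- For all positive integers n, the connected size Ramsey number of the matching nK₂ versus the 4-cycle C₄ is at most ⌊(9n−1)/2⌋; that is, there exists a connected graph G with at most ⌊(9n−1)/2⌋ edges such that G → (nK₂, C₄). -/
/-!
The graph `K₃,₃ − e` has 8 edges and arrows `(2K₂, C₄)`: it is triangle-free, so a red graph
without two disjoint edges is a star, and deleting any one vertex of `K₃,₃ − e` still leaves a
blue `C₄`. Two graphs arrowing `(n₁K₂, H)` and `(n₂K₂, H)`, joined by a bridge, arrow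
`((n₁ + n₂)K₂, H)`, since a colouring restricts to both sides. Starting from `C₄` (for `n = 1`)
and `K₃,₃ − e` (for `n = 2`) and adding a bridge and a copy of `K₃,₃ − e` for every two further
matching edges gives `(9n − 1)/2` edges.
-/

open SimpleGraph

/-- `G` contains a copy of `H`, i.e. there is an injective graph homomorphism from `H` to `G`. -/
def ContainsCopy {V W : Type*} (G : SimpleGraph V) (H : SimpleGraph W) : Prop :=
  ∃ f : H →g G, Function.Injective f

/-- `G` arrows `(G₁, G₂)`: for every red/blue colouring of the edges of `G`
(given by a subgraph `R ≤ G` of red edges, the blue edges being `G \ R`),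
there is a red copy of `G₁` or a blue copy of `G₂`. -/
def Arrows {V V₁ V₂ : Type*} (G : SimpleGraph V) (G₁ : SimpleGraph V₁) (G₂ : SimpleGraph V₂) :
    Prop :=
  ∀ R : SimpleGraph V, R ≤ G → ContainsCopy R G₁ ∨ ContainsCopy (G \ R) G₂

/-- The matching `nK₂` with `n` edges. -/
def Matching (n : ℕ) : SimpleGraph (Fin n × Fin 2) where
  Adj a b := a.1 = b.1 ∧ a.2 ≠ b.2
  symm := ⟨by intro a b h; exact ⟨h.1.symm, h.2.symm⟩⟩
  loopless := ⟨by intro a h; exact h.2 rfl⟩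

/-- `n` disjoint copies of the graph `H`. -/
def Copies (n : ℕ) {W : Type*} (H : SimpleGraph W) : SimpleGraph (Fin n × W) where
  Adj a b := a.1 = b.1 ∧ H.Adj a.2 b.2
  symm := ⟨by intro a b h; exact ⟨h.1.symm, h.2.symm⟩⟩
  loopless := ⟨by intro a h; exact H.loopless.irrefl _ h.2⟩

/-- Disjoint union of two graphs. -/
def DisjUnion {V W : Type*} (G : SimpleGraph V) (H : SimpleGraph W) : SimpleGraph (V ⊕ W) where
  Adj a b :=
    match a, b with
    | Sum.inl x, Sum.inl y => G.Adj x y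
    | Sum.inr x, Sum.inr y => H.Adj x y
    | _, _ => False
  symm := ⟨by
    rintro (x | x) (y | y) h
    · exact G.adj_symm h
    · exact h.elim
    · exact h.elim
    · exact H.adj_symm h⟩
  loopless := ⟨by
    rintro (x | x) h
    · exact G.loopless.irrefl _ h
    · exact H.loopless.irrefl _ h⟩

namespace SimpleGraph

section Containment

variable {V W : Type*} {G R : SimpleGraph V} {H : SimpleGraph W}

lemma containsCopy_iff_isContained : ContainsCopy G H ↔ H ⊑ G :=
  ⟨fun ⟨f, hf⟩ => ⟨f.toCopy hf⟩, fun ⟨f⟩ => ⟨f.toHom, f.injective⟩⟩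

lemma arrows_iff {V₁ V₂ : Type*} {G₁ : SimpleGraph V₁} {G₂ : SimpleGraph V₂} :
    Arrows G G₁ G₂ ↔ ∀ R ≤ G, G₁ ⊑ R ∨ G₂ ⊑ G \ R := by
  simp only [Arrows, containsCopy_iff_isContained]

lemma IsContained.sum {V' W' : Type*} {G' : SimpleGraph V'} {H' : SimpleGraph W'}
    (hG : G ⊑ G') (hH : H ⊑ H') : G ⊕g H ⊑ G' ⊕g H' :=
  let ⟨f⟩ := hG
  let ⟨g⟩ := hH
  ⟨(f.toHom.sum g.toHom).toCopy (Sum.map_injective.2 ⟨f.injective, g.injective⟩)⟩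

lemma Embedding.sdiff_comap_isContained {V' : Type*} {G' : SimpleGraph V'} (f : G' ↪g G)
    (R : SimpleGraph V) : G' \ R.comap f ⊑ G \ R :=
  ⟨Hom.toCopy ⟨f, fun h => ⟨f.map_adj_iff.2 h.1, h.2⟩⟩ f.injective⟩

lemma cycleGraph_four_isContained {a b c d : V} (hab : G.Adj a b) (hbc : G.Adj b c)
    (hcd : G.Adj c d) (hda : G.Adj d a) (hac : a ≠ c) (hbd : b ≠ d) : cycleGraph 4 ⊑ G := by
  refine ⟨⟨⟨![a, b, c, d], fun {u v} huv => ?_⟩, fun u v huv => ?_⟩⟩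
  · rw [cycleGraph_adj] at huv
    fin_cases u <;> fin_cases v <;> first | exact absurd huv (by decide) | simp_all [G.adj_symm]
  · fin_cases u <;> fin_cases v <;> simp_all [hab.ne, hbc.ne, hcd.ne, hda.ne, hab.ne.symm,
      hbc.ne.symm, hcd.ne.symm, hda.ne.symm, hac.symm, hbd.symm]

end Containment

section Matching

variable {V : Type*} {R : SimpleGraph V}

def matchingSumIso (m n : ℕ) : Matching m ⊕g Matching n ≃g Matching (m + n) where
  toEquiv := (Equiv.sumProdDistrib _ _ _).symm.trans (finSumFinEquiv.prodCongr (Equiv.refl _))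
  map_rel_iff' := by
    rintro (⟨i, k⟩ | ⟨i, k⟩) (⟨j, l⟩ | ⟨j, l⟩) <;> simp [Matching, Fin.ext_iff] <;> omega

def matchingOneIso : Matching 1 ≃g completeGraph (Fin 2) where
  toEquiv := Equiv.uniqueProd _ _
  map_rel_iff' := by simp [Matching]

lemma matching_one_isContained_iff : Matching 1 ⊑ R ↔ R ≠ ⊥ := by
  rw [isContained_congr_left matchingOneIso, ← not_cliqueFree_iff_top_isContained, cliqueFree_two]

lemma matching_two_isContained {a b c d : V} (hab : R.Adj a b) (hcd : R.Adj c d)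
    (hac : a ≠ c) (had : a ≠ d) (hbc : b ≠ c) (hbd : b ≠ d) : Matching 2 ⊑ R := by
  refine ⟨⟨⟨fun p => ![![a, b], ![c, d]] p.1 p.2, ?_⟩, ?_⟩⟩
  · rintro ⟨i, k⟩ ⟨j, l⟩ ⟨rfl, hkl⟩
    fin_cases i <;> fin_cases k <;> fin_cases l <;> simp_all [R.adj_symm]
  · rintro ⟨i, k⟩ ⟨j, l⟩ h
    fin_cases i <;> fin_cases j <;> fin_cases k <;> fin_cases l <;>
      simp_all [hab.ne, hcd.ne, hab.ne.symm, hcd.ne.symm, hac.symm, had.symm, hbc.symm, hbd.symm]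

end Matching

section Arrows

variable {V W : Type*} {G R : SimpleGraph V} {H : SimpleGraph W}

lemma Arrows.mono {V₁ V₂ : Type*} {G₁ : SimpleGraph V₁} {G₂ : SimpleGraph V₂}
    {G' : SimpleGraph V} (h : Arrows G G₁ G₂) (hle : G ≤ G') : Arrows G' G₁ G₂ := by
  rw [arrows_iff] at h ⊢
  intro R _
  refine (h (R ⊓ G) inf_le_right).imp (·.mono_right inf_le_left) (·.mono_right ?_)
  rintro a b ⟨hab, hn⟩
  exact ⟨hle hab, fun hr => hn ⟨hr, hab⟩⟩

lemma arrows_matching_zero (G : SimpleGraph V) (H : SimpleGraph W) : Arrows G (Matching 0) H :=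
  arrows_iff.2 fun _ _ => .inl .of_isEmpty

lemma arrows_matching_one_self (G : SimpleGraph V) : Arrows G (Matching 1) G := by
  refine arrows_iff.2 fun R _ => ?_
  obtain rfl | hR := eq_or_ne R ⊥
  · exact .inr (by rw [sdiff_bot]; exact .rfl)
  · exact .inl (matching_one_isContained_iff.2 hR)

lemma exists_forall_adj_eq_or_eq_of_not_matching_two_isContained [Nonempty V]
    (hR : R.CliqueFree 3) (hM : ¬Matching 2 ⊑ R) : ∃ v, ∀ ⦃a b⦄, R.Adj a b → a = v ∨ b = v := by
  classical
  by_contra! hstar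
  obtain ⟨u, w, huw, -⟩ := hstar (Classical.arbitrary V)
  have meets : ∀ ⦃a b⦄, R.Adj a b → a = u ∨ a = w ∨ b = u ∨ b = w := by
    intro a b hab
    by_contra! ⟨hau, haw, hbu, hbw⟩
    exact hM (matching_two_isContained huw hab hau.symm hbu.symm haw.symm hbw.symm)
  obtain ⟨x, hwx, hxu⟩ : ∃ x, R.Adj w x ∧ x ≠ u := by
    obtain ⟨a, b, hab, hau, hbu⟩ := hstar u
    rcases meets hab with rfl | rfl | rfl | rfl
    exacts [(hau rfl).elim, ⟨b, hab, hbu⟩, (hbu rfl).elim, ⟨a, hab.symm, hau⟩]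
  obtain ⟨y, huy, hyw⟩ : ∃ y, R.Adj u y ∧ y ≠ w := by
    obtain ⟨a, b, hab, haw, hbw⟩ := hstar w
    rcases meets hab with rfl | rfl | rfl | rfl
    exacts [⟨b, hab, hbw⟩, (haw rfl).elim, ⟨a, hab.symm, haw⟩, (hbw rfl).elim]
  obtain rfl | hxy := eq_or_ne x y
  · exact hR {u, w, x} (is3Clique_triple_iff.2 ⟨huw, huy, hwx⟩)
  · exact hM (matching_two_isContained hwx huy huw.ne.symm hyw.symm hxu hxy)

theorem arrows_matching_two_of_cliqueFree [Nonempty V] (hG : G.CliqueFree 3)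
    (hH : ∀ v, H ⊑ G.deleteIncidenceSet v) : Arrows G (Matching 2) H := by
  refine arrows_iff.2 fun R hR => or_iff_not_imp_left.2 fun hM => ?_
  obtain ⟨v, hv⟩ :=
    exists_forall_adj_eq_or_eq_of_not_matching_two_isContained (hG.anti hR) hM
  refine (hH v).mono_right fun a b hab => ?_
  rw [deleteIncidenceSet_adj] at hab
  exact ⟨hab.1, fun h => (hv h).elim hab.2.1 hab.2.2⟩

theorem Arrows.sum_matching {V₁ V₂ : Type*} {G₁ : SimpleGraph V₁} {G₂ : SimpleGraph V₂}
    {m n : ℕ} (h₁ : Arrows G₁ (Matching m) H) (h₂ : Arrows G₂ (Matching n) H) :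
    Arrows (G₁ ⊕g G₂) (Matching (m + n)) H := by
  rw [arrows_iff] at *
  intro R hR
  let e₁ : G₁ ↪g G₁ ⊕g G₂ := Embedding.sumInl
  let e₂ : G₂ ↪g G₁ ⊕g G₂ := Embedding.sumInr
  rcases h₁ (R.comap e₁) (fun _ _ h => e₁.map_adj_iff.1 (hR h)) with red₁ | blue₁
  · rcases h₂ (R.comap e₂) (fun _ _ h => e₂.map_adj_iff.1 (hR h)) with red₂ | blue₂
    · refine .inl ((matchingSumIso m n).symm.isContained.trans
        ((IsContained.sum red₁ red₂).trans (.of_le ?_)))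
      rintro (a | a) (b | b) h <;> simp_all [e₁, e₂]
    · exact .inr (blue₂.trans (Embedding.sdiff_comap_isContained e₂ R))
  · exact .inr (blue₁.trans (Embedding.sdiff_comap_isContained e₁ R))

end Arrows

lemma ncard_edgeSet_sum_sup_edge_le {V W : Type*} [Finite V] [Finite W] (G : SimpleGraph V)
    (H : SimpleGraph W) (v : V) (w : W) :
    ((G ⊕g H) ⊔ edge (.inl v) (.inr w)).edgeSet.ncard ≤
      G.edgeSet.ncard + H.edgeSet.ncard + 1 := by
  have hsum : (G ⊕g H).edgeSet.ncard = G.edgeSet.ncard + H.edgeSet.ncard := by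
    simp only [← Nat.card_coe_set_eq, Nat.card_congr edgeSetSumEquiv, Nat.card_sum]
  have hedge : (edge (Sum.inl v : V ⊕ W) (.inr w)).edgeSet.ncard = 1 := by
    rw [edgeSet_edge_of_ne Sum.inl_ne_inr, Set.ncard_singleton]
  rw [edgeSet_sup, ← hsum, ← hedge]
  exact Set.ncard_union_le _ _

def k33MinusEdge : SimpleGraph (Fin 3 ⊕ Fin 3) :=
  (completeBipartiteGraph (Fin 3) (Fin 3)).deleteEdges {s(.inl 2, .inr 2)}

lemma k33MinusEdge_adj {a b : Fin 3 ⊕ Fin 3} : k33MinusEdge.Adj a b ↔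
    (a.isLeft ∧ b.isRight ∨ a.isRight ∧ b.isLeft) ∧ s(a, b) ≠ s(.inl 2, .inr 2) := by
  simp [k33MinusEdge]

instance : DecidableRel k33MinusEdge.Adj := fun _ _ => decidable_of_iff' _ k33MinusEdge_adj

lemma ncard_edgeSet_k33MinusEdge : k33MinusEdge.edgeSet.ncard = 8 := by
  rw [← coe_edgeFinset, Set.ncard_coe_finset]
  decide

lemma k33MinusEdge_cliqueFree : k33MinusEdge.CliqueFree 3 :=
  ((CompleteBipartiteGraph.bicoloring _ _).colorable.cliqueFree (by simp)).anti (deleteEdges_le _)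

lemma k33MinusEdge_connected : k33MinusEdge.Connected := by
  have h : ∀ v, k33MinusEdge.Reachable v (.inl 0) := by
    rintro (i | j)
    · exact (show k33MinusEdge.Adj (.inl i) (.inr 0) by revert i; decide).reachable.trans
        (show k33MinusEdge.Adj (.inr 0) (.inl 0) by decide).reachable
    · exact (show k33MinusEdge.Adj (.inr j) (.inl 0) by revert j; decide).reachable
  exact ⟨fun u v => (h u).trans (h v).symm⟩

lemma cycleGraph_four_isContained_k33MinusEdge_deleteIncidenceSet (v : Fin 3 ⊕ Fin 3) :
    cycleGraph 4 ⊑ k33MinusEdge.deleteIncidenceSet v := by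
  obtain ⟨a, b, c, d, hab, hbc, hcd, hda, hac, hbd⟩ : ∃ a b c d,
      (k33MinusEdge.Adj a b ∧ a ≠ v ∧ b ≠ v) ∧ (k33MinusEdge.Adj b c ∧ b ≠ v ∧ c ≠ v) ∧
      (k33MinusEdge.Adj c d ∧ c ≠ v ∧ d ≠ v) ∧ (k33MinusEdge.Adj d a ∧ d ≠ v ∧ a ≠ v) ∧
      a ≠ c ∧ b ≠ d := by
    set_option synthInstance.maxSize 1000 in revert v; decide
  exact cycleGraph_four_isContained (deleteIncidenceSet_adj.2 hab) (deleteIncidenceSet_adj.2 hbc)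
    (deleteIncidenceSet_adj.2 hcd) (deleteIncidenceSet_adj.2 hda) hac hbd

lemma k33MinusEdge_arrows : Arrows k33MinusEdge (Matching 2) (cycleGraph 4) :=
  arrows_matching_two_of_cliqueFree k33MinusEdge_cliqueFree
    cycleGraph_four_isContained_k33MinusEdge_deleteIncidenceSet

end SimpleGraph

/-- `r̂_c(nK₂, H) ≤ m`. -/
def ConnectedSizeRamseyMatchingLE {W : Type*} (H : SimpleGraph W) (n m : ℕ) : Prop :=
  ∃ (V : Type) (G : SimpleGraph V), Finite V ∧ G.Connected ∧ G.edgeSet.ncard ≤ m ∧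
    Arrows G (Matching n) H

namespace ConnectedSizeRamseyMatchingLE

variable {W : Type*} {H : SimpleGraph W}

lemma mono {n m m' : ℕ} (h : ConnectedSizeRamseyMatchingLE H n m) (hm : m ≤ m') :
    ConnectedSizeRamseyMatchingLE H n m' :=
  let ⟨V, G, hV, hG, hcard, harr⟩ := h
  ⟨V, G, hV, hG, hcard.trans hm, harr⟩

lemma add {n₁ n₂ m₁ m₂ : ℕ} (h₁ : ConnectedSizeRamseyMatchingLE H n₁ m₁)
    (h₂ : ConnectedSizeRamseyMatchingLE H n₂ m₂) :
    ConnectedSizeRamseyMatchingLE H (n₁ + n₂) (m₁ + m₂ + 1) := by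
  obtain ⟨V₁, G₁, _, hG₁, hcard₁, harr₁⟩ := h₁
  obtain ⟨V₂, G₂, _, hG₂, hcard₂, harr₂⟩ := h₂
  obtain ⟨v⟩ := hG₁.nonempty
  obtain ⟨w⟩ := hG₂.nonempty
  refine ⟨V₁ ⊕ V₂, (G₁ ⊕g G₂) ⊔ edge (.inl v) (.inr w), inferInstance, hG₁.sum_sup_edge hG₂,
    ?_, (harr₁.sum_matching harr₂).mono le_sup_left⟩
  have := ncard_edgeSet_sum_sup_edge_le G₁ G₂ v w
  omega

lemma zero (H : SimpleGraph W) : ConnectedSizeRamseyMatchingLE H 0 0 :=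
  ⟨Unit, ⊥, inferInstance, .of_subsingleton, by simp, arrows_matching_zero _ _⟩

lemma one_self {W : Type} [Finite W] {H : SimpleGraph W} (hH : H.Connected) :
    ConnectedSizeRamseyMatchingLE H 1 H.edgeSet.ncard :=
  ⟨W, H, inferInstance, hH, le_rfl, arrows_matching_one_self H⟩

end ConnectedSizeRamseyMatchingLE

lemma connectedSizeRamseyMatchingLE_cycleGraph_four_two :
    ConnectedSizeRamseyMatchingLE (cycleGraph 4) 2 8 :=
  ⟨_, k33MinusEdge, inferInstance, k33MinusEdge_connected, ncard_edgeSet_k33MinusEdge.le,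
    k33MinusEdge_arrows⟩

lemma connectedSizeRamseyMatchingLE_cycleGraph_four :
    ∀ n, ConnectedSizeRamseyMatchingLE (cycleGraph 4) n ((9 * n - 1) / 2)
  | 0 => .zero _
  | 1 => (ConnectedSizeRamseyMatchingLE.one_self cycleGraph_connected).mono
      (by rw [← coe_edgeFinset, Set.ncard_coe_finset]; decide)
  | 2 => connectedSizeRamseyMatchingLE_cycleGraph_four_two
  | n + 3 => ((connectedSizeRamseyMatchingLE_cycleGraph_four (n + 1)).add
      connectedSizeRamseyMatchingLE_cycleGraph_four_two).mono (by omega)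

theorem connected_size_ramsey_matching_cycle4_upper_general (n : ℕ) :
    ∃ (V : Type) (G : SimpleGraph V), Finite V ∧ G.Connected ∧
      G.edgeSet.ncard ≤ (9 * n - 1) / 2 ∧ Arrows G (Matching n) (cycleGraph 4) :=
  connectedSizeRamseyMatchingLE_cycleGraph_four n

/-- For all positive integers `n`, the connected size Ramsey number of `nK₂`
versus `C₄` is at most `⌊(9n−1)/2⌋`: there is a connected graph with at most `⌊(9n−1)/2⌋` edges
arrowing `(nK₂, C₄)`. -/
theorem connected_size_ramsey_matching_cycle4_upper (n : ℕ) (hn : 0 < n) :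
    ∃ (V : Type) (G : SimpleGraph V), Finite V ∧ G.Connected ∧
      G.edgeSet.ncard ≤ (9 * n - 1) / 2 ∧ Arrows G (Matching n) (cycleGraph 4) :=
  connected_size_ramsey_matching_cycle4_upper_general n
end

section
/- For all positive integers n, the connected size Ramsey number of the matching nK₂ versus the triangle C₃ equals 4n−1; that is, there exists a connected graph G with exactly 4n−1 edges such that G → (nK₂, C₃), and every connected graph G with G → (nK₂, C₃) has at least 4n−1 edges. -/
open SimpleGraph

/-!
Upper bound: `m + 1` triangles strung along a path through one vertex of each have `4(m + 1) - 1`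
edges, and a colouring either puts a red edge into every triangle, giving a red `(m + 1)K₂`, or
leaves a whole triangle blue.

Lower bound: every finite graph `H` has an edge set `R` meeting all its triangles in which every
matching has at most `(e(H) + q(H)) / 4` edges, where `q(H)` counts the components containing a
triangle; colouring `R` red shows that a connected graph with at most `4n - 2` edges does not arrow
`(nK₂, C₃)`. `R` is built by induction on `e(H)`: isolate a set `X` (a triangle, or a single vertex)
and add to a cover of the rest the edges of the triangle, resp. the edges at the vertex. These
pairwise meet, so they add at most one edge to a matching, and the edges deleted at `X` pay for it
and for the triangle components into which `X` splits its component. A triangle `T` works when every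
triangle through a vertex of `T` shares an edge with `T`; if no triangle is of this kind, every
triangle contains the centre of a bowtie, and descending through ever smaller triangle components
yields a bowtie centre `c` splitting off at most one of them, which works since `deg c ≥ 4`.
-/

namespace SimpleGraph

lemma cycleGraph_three_adj {a b : Fin 3} : (cycleGraph 3).Adj a b ↔ a ≠ b := by
  revert a b; decide

lemma containsCopy_matching {n : ℕ} {W : Type*} {R : SimpleGraph (Fin n × W)} (u v : Fin n → W)
    (huv : ∀ i, R.Adj (i, u i) (i, v i)) : ContainsCopy R (Matching n) := by
  refine ⟨⟨fun p => (p.1, ![u p.1, v p.1] p.2), ?_⟩, ?_⟩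
  · rintro ⟨i, s⟩ ⟨i', s'⟩ ⟨rfl : i = i', hss'⟩
    fin_cases s <;> fin_cases s'
    exacts [absurd rfl hss', huv i, (huv i).symm, absurd rfl hss']
  · rintro ⟨i, s⟩ ⟨i', s'⟩ h
    obtain ⟨rfl, h⟩ := Prod.ext_iff.1 h
    have hne : u i ≠ v i := fun h => (huv i).ne (by rw [h])
    fin_cases s <;> fin_cases s' <;> simp_all [eq_comm]

def triangleChainEdge (m : ℕ) : Fin (m + 1) × Fin 3 ⊕ Fin m → Sym2 (Fin (m + 1) × Fin 3)
  | .inl p => s(p, (p.1, p.2 + 1))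
  | .inr i => s((i.castSucc, 0), (i.succ, 0))

def triangleChain (m : ℕ) : SimpleGraph (Fin (m + 1) × Fin 3) :=
  fromEdgeSet (Set.range (triangleChainEdge m))

lemma triangleChainEdge_injective (m : ℕ) : (triangleChainEdge m).Injective := by
  rintro (⟨i, j⟩ | i) (⟨i', j'⟩ | i') h <;>
    simp only [triangleChainEdge, Sym2.eq_iff, Prod.ext_iff, Fin.ext_iff, Fin.val_castSucc,
      Fin.val_succ, Fin.val_add] at h
  all_goals
    first
    | omega
    | simp only [Sum.inl.injEq, Sum.inr.injEq, Prod.mk.injEq, Fin.ext_iff]; omega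

lemma edgeSet_triangleChain (m : ℕ) :
    (triangleChain m).edgeSet = Set.range (triangleChainEdge m) := by
  rw [triangleChain, edgeSet_fromEdgeSet, sdiff_eq_left, Set.disjoint_left]
  rintro _ ⟨(⟨i, j⟩ | i), rfl⟩ <;> simp [triangleChainEdge, Fin.ext_iff]

lemma ncard_edgeSet_triangleChain (m : ℕ) :
    (triangleChain m).edgeSet.ncard = 4 * (m + 1) - 1 := by
  rw [edgeSet_triangleChain, Set.ncard_range_of_injective (triangleChainEdge_injective m),
    Nat.card_sum, Nat.card_prod]
  simp only [Nat.card_eq_fintype_card, Fintype.card_fin]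
  omega

lemma triangleChain_adj_of_ne (m : ℕ) (i : Fin (m + 1)) {j j' : Fin 3} (h : j ≠ j') :
    (triangleChain m).Adj (i, j) (i, j') := by
  refine (fromEdgeSet_adj _).2 ⟨?_, by simpa using h⟩
  obtain rfl | rfl : j' = j + 1 ∨ j = j' + 1 := by revert j j'; decide
  exacts [⟨.inl (i, j), rfl⟩, ⟨.inl (i, j'), Sym2.eq_swap⟩]

lemma triangleChain_connected (m : ℕ) : (triangleChain m).Connected := by
  have base : ∀ i, (triangleChain m).Reachable (i, 0) (0, 0) := by
    refine Fin.induction .rfl fun i ih => Adj.reachable ?_ |>.trans ih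
    exact (fromEdgeSet_adj _).2 ⟨⟨.inr i, Sym2.eq_swap⟩, by simp [Fin.ext_iff]⟩
  refine connected_iff_exists_forall_reachable _ |>.2 ⟨(0, 0), fun ⟨i, j⟩ => ?_⟩
  obtain rfl | hj := eq_or_ne j 0
  · exact (base i).symm
  · exact ((triangleChain_adj_of_ne m i hj).reachable.trans (base i)).symm

lemma triangleChain_arrows (m : ℕ) :
    Arrows (triangleChain m) (Matching (m + 1)) (cycleGraph 3) := by
  intro R hR
  by_cases h : ∀ i, ∃ j j', R.Adj (i, j) (i, j')
  · choose u v huv using h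
    exact .inl (containsCopy_matching u v huv)
  · push Not at h
    obtain ⟨i, hi⟩ := h
    refine .inr ⟨⟨fun j => (i, j), fun {j j'} hjj' => ?_⟩, fun j j' h => (Prod.ext_iff.1 h).2⟩
    exact ⟨triangleChain_adj_of_ne m i (cycleGraph_three_adj.1 hjj'), hi j j'⟩

variable {V : Type*} {H : SimpleGraph V} {X : Set V}

/-- Deletes the edges at `X` but keeps its vertices, so that the vertex type does not change. -/
def isolate (H : SimpleGraph V) (X : Set V) : SimpleGraph V where
  Adj a b := H.Adj a b ∧ a ∉ X ∧ b ∉ X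
  symm := ⟨fun _ _ h => ⟨h.1.symm, h.2.2, h.2.1⟩⟩
  loopless := ⟨fun a h => H.loopless.irrefl a h.1⟩

lemma isolate_le (H : SimpleGraph V) (X : Set V) : H.isolate X ≤ H := fun _ _ h => h.1

lemma edgeSet_isolate (H : SimpleGraph V) (X : Set V) :
    (H.isolate X).edgeSet = H.edgeSet \ ⋃ x ∈ X, H.incidenceSet x := by
  ext e
  induction e with
  | h a b =>
    simp only [isolate, mem_edgeSet, Set.mem_sdiff, Set.mem_iUnion, mk'_mem_incidenceSet_iff]
    grind

lemma ncard_edgeSet_isolate_add [Finite V] (H : SimpleGraph V) (X : Set V) :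
    (H.isolate X).edgeSet.ncard + (⋃ x ∈ X, H.incidenceSet x).ncard = H.edgeSet.ncard := by
  rw [edgeSet_isolate]
  exact Set.ncard_sdiff_add_ncard_of_subset (Set.iUnion₂_subset fun x _ => H.incidenceSet_subset x)

lemma ncard_edgeSet_isolate_lt [Finite V] {a b : V} (ha : a ∈ X) (hab : H.Adj a b) :
    (H.isolate X).edgeSet.ncard < H.edgeSet.ncard :=
  Set.ncard_lt_ncard <| Set.ssubset_iff_subset_ne.2
    ⟨edgeSet_mono (H.isolate_le X), fun h => (h ▸ hab : s(a, b) ∈ (H.isolate X).edgeSet).2.1 ha⟩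

lemma reachable_isolate_of_mem_supp {G : SimpleGraph V} (hG : G ≤ H) {C : G.ConnectedComponent}
    (hCX : ∀ v ∈ C.supp, v ∉ X) {u w : V} (hu : u ∈ C.supp) (hw : w ∈ C.supp) :
    (H.isolate X).Reachable u w := by
  obtain ⟨p⟩ := C.reachable_of_mem_supp hu hw
  induction p with
  | nil => rfl
  | cons h p ih =>
    have hy := (C.mem_supp_iff _).2 <|
      (ConnectedComponent.connectedComponentMk_eq_of_adj h).symm.trans ((C.mem_supp_iff _).1 hu)
    exact (show (H.isolate X).Adj _ _ from ⟨hG h, hCX _ hu, hCX _ hy⟩).reachable.trans (ih hy hw)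

lemma exists_adj_of_walk {u z : V} (p : H.Walk u z) (hu : u ∉ X) (hz : z ∈ X) :
    ∃ a, (H.isolate X).Reachable u a ∧ a ∉ X ∧ ∃ b ∈ X, H.Adj a b := by
  induction p with
  | nil => exact absurd hz hu
  | @cons u y z h p ih =>
    by_cases hy : y ∈ X
    · exact ⟨u, .rfl, hu, y, hy, h⟩
    · obtain ⟨a, hr, ha⟩ := ih hy hz
      exact ⟨a, (show (H.isolate X).Adj u y from ⟨h, hu, hy⟩).reachable.trans hr, ha⟩

def ConnectedComponent.HasTriangle {G : SimpleGraph V} (C : G.ConnectedComponent) : Prop :=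
  ∃ a b c, G.Adj a b ∧ G.Adj a c ∧ G.Adj b c ∧ G.connectedComponentMk a = C

noncomputable def numTriangleComponents (G : SimpleGraph V) : ℕ :=
  {C : G.ConnectedComponent | C.HasTriangle}.ncard

def trianglePieces (H : SimpleGraph V) (X : Set V) (K : H.ConnectedComponent) :
    Set (H.isolate X).ConnectedComponent :=
  {C | C.HasTriangle ∧ C.map (Hom.ofLE (H.isolate_le X)) = K}

@[simp]
lemma map_connectedComponentMk_isolate (v : V) :
    ((H.isolate X).connectedComponentMk v).map (Hom.ofLE (H.isolate_le X)) =
      H.connectedComponentMk v :=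
  rfl

lemma notMem_supp_of_hasTriangle {C : (H.isolate X).ConnectedComponent} (hC : C.HasTriangle)
    {x : V} (hx : x ∈ X) : x ∉ C.supp := by
  obtain ⟨a, b, c, hab, -, -, rfl⟩ := hC
  intro hxa
  obtain ⟨p⟩ := ConnectedComponent.exact ((ConnectedComponent.mem_supp_iff _ _).1 hxa)
  cases p with
  | nil => exact hab.2.1 hx
  | cons h _ => exact h.2.1 hx

lemma exists_adj_of_mem_trianglePieces {K : H.ConnectedComponent}
    {C : (H.isolate X).ConnectedComponent} (hC : C ∈ H.trianglePieces X K) {x : V} (hx : x ∈ X)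
    (hxK : x ∈ K.supp) : ∃ a ∈ C.supp, a ∉ X ∧ ∃ b ∈ X, H.Adj a b := by
  obtain ⟨⟨a, b, c, hab, -, -, rfl⟩, rfl⟩ := hC
  obtain ⟨p⟩ := ConnectedComponent.exact ((ConnectedComponent.mem_supp_iff _ _).1 hxK).symm
  obtain ⟨a', hr, ha'⟩ := exists_adj_of_walk p hab.2.1 hx
  exact ⟨a', (ConnectedComponent.sound hr).symm, ha'⟩

lemma injOn_map_isolate {K : H.ConnectedComponent} (hXK : X ⊆ K.supp) :
    Set.InjOn (ConnectedComponent.map (Hom.ofLE (H.isolate_le X)))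
      {C | C.map (Hom.ofLE (H.isolate_le X)) ≠ K} := by
  intro C₁ h₁ C₂ _ h
  induction C₁ using ConnectedComponent.ind with | h u₁ =>
  induction C₂ using ConnectedComponent.ind with | h u₂ =>
  simp only [Set.mem_ofPred_eq, map_connectedComponentMk_isolate] at h h₁
  refine ConnectedComponent.sound (reachable_isolate_of_mem_supp le_rfl ?_ rfl h.symm)
  exact fun v hv hvX => h₁ (hv.symm.trans (hXK hvX))

lemma numTriangleComponents_isolate_add_one_le [Finite V] {K : H.ConnectedComponent}
    (hK : K.HasTriangle) (hXK : X ⊆ K.supp) :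
    (H.isolate X).numTriangleComponents + 1 ≤
      H.numTriangleComponents + (H.trianglePieces X K).ncard := by
  set φ := ConnectedComponent.map (Hom.ofLE (H.isolate_le X))
  have hsplit : {C : (H.isolate X).ConnectedComponent | C.HasTriangle} ⊆
      H.trianglePieces X K ∪ {C | C.HasTriangle ∧ φ C ≠ K} := fun C hC => by
    by_cases h : φ C = K
    exacts [.inl ⟨hC, h⟩, .inr ⟨hC, h⟩]
  have hrest : {C | C.HasTriangle ∧ φ C ≠ K}.ncard ≤ ({L | L.HasTriangle} \ {K}).ncard := by
    refine Set.ncard_le_ncard_of_injOn φ ?_ ((injOn_map_isolate hXK).mono fun C hC => hC.2)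
    rintro _ ⟨⟨a, b, c, hab, hac, hbc, rfl⟩, hne⟩
    exact ⟨⟨a, b, c, hab.1, hac.1, hbc.1, rfl⟩, hne⟩
  have hK' := Set.ncard_sdiff_singleton_add_one (show K ∈ {L | L.HasTriangle} from hK)
  have := (Set.ncard_le_ncard hsplit).trans (Set.ncard_union_le _ _)
  unfold numTriangleComponents
  omega

def IsEdgeMatching (R : SimpleGraph V) (M : Finset (Sym2 V)) : Prop :=
  ↑M ⊆ R.edgeSet ∧ (M : Set (Sym2 V)).Pairwise fun e f => ∀ v ∈ e, v ∉ f

lemma IsEdgeMatching.exists_card_le_add_one {U R : SimpleGraph V} {M : Finset (Sym2 V)}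
    (hM : (U ⊔ R).IsEdgeMatching M) (hU : U.edgeSet.Pairwise fun e f => ∃ v ∈ e, v ∈ f) :
    ∃ M', R.IsEdgeMatching M' ∧ M.card ≤ M'.card + 1 := by
  classical
  refine ⟨M.filter (· ∉ U.edgeSet),
    ⟨fun e he => ?_, hM.2.mono (Finset.coe_subset.2 (Finset.filter_subset _ _))⟩, ?_⟩
  · rw [Finset.coe_filter] at he
    exact (edgeSet_sup U R ▸ hM.1 he.1).resolve_left he.2
  · have hU1 : (M.filter (· ∈ U.edgeSet)).card ≤ 1 := Finset.card_le_one.2 fun e he f hf => by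
      rw [Finset.mem_filter] at he hf
      by_contra hne
      obtain ⟨v, hve, hvf⟩ := hU he.2 hf.2 hne
      exact hM.2 he.1 hf.1 hne v hve hvf
    have := Finset.card_filter_add_card_filter_not (s := M) (· ∈ U.edgeSet)
    omega

lemma _root_.ContainsCopy.exists_isEdgeMatching {R : SimpleGraph V} {n : ℕ}
    (h : ContainsCopy R (Matching n)) : ∃ M, R.IsEdgeMatching M ∧ M.card = n := by
  classical
  obtain ⟨f, hf⟩ := h
  have hadj (i : Fin n) : R.Adj (f (i, 0)) (f (i, 1)) := f.map_adj ⟨rfl, zero_ne_one⟩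
  have hblock {i j : Fin n} {s t : Fin 2} (h : f (i, s) = f (j, t)) : i = j :=
    (Prod.ext_iff.1 (hf h)).1
  refine ⟨Finset.univ.image fun i => s(f (i, 0), f (i, 1)), ⟨?_, ?_⟩, ?_⟩
  · simpa [Set.subset_def] using hadj
  · simp only [Finset.coe_image, Finset.coe_univ, Set.image_univ]
    rintro _ ⟨i, rfl⟩ _ ⟨j, rfl⟩ hne v hvi hvj
    simp only [Sym2.mem_iff] at hvi hvj
    rcases hvi with rfl | rfl <;> rcases hvj with h | h <;> exact hne (by rw [hblock h])
  · rw [Finset.card_image_of_injective _ fun i j h => ?_, Finset.card_univ, Fintype.card_fin]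
    rcases Sym2.eq_iff.1 h with ⟨h, -⟩ | ⟨h, -⟩ <;> exact hblock h

def CoversTriangles (H R : SimpleGraph V) : Prop :=
  ∀ a b c, H.Adj a b → H.Adj a c → H.Adj b c → R.Adj a b ∨ R.Adj a c ∨ R.Adj b c

lemma CoversTriangles.not_containsCopy_sdiff {R : SimpleGraph V} (h : CoversTriangles H R) :
    ¬ ContainsCopy (H \ R) (cycleGraph 3) := by
  rintro ⟨g, -⟩
  have hg (i j : Fin 3) (hij : i ≠ j := by decide) : (H \ R).Adj (g i) (g j) :=
    g.map_adj (cycleGraph_three_adj.2 hij)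
  rcases h _ _ _ (hg 0 1).1 (hg 0 2).1 (hg 1 2).1 with h | h | h
  exacts [(hg 0 1).2 h, (hg 0 2).2 h, (hg 1 2).2 h]

def HasSparseTriangleCover (H : SimpleGraph V) : Prop :=
  ∃ R ≤ H, CoversTriangles H R ∧
    ∀ M, R.IsEdgeMatching M → 4 * M.card ≤ H.edgeSet.ncard + H.numTriangleComponents

lemma hasSparseTriangleCover_of_forall_not_adj
    (h : ∀ a b c, H.Adj a b → H.Adj a c → ¬ H.Adj b c) : H.HasSparseTriangleCover := by
  refine ⟨⊥, bot_le, fun a b c hab hac hbc => absurd hbc (h a b c hab hac), fun M hM => ?_⟩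
  rw [Finset.card_eq_zero.2 (Finset.coe_eq_empty.1 (Set.subset_empty_iff.1 (edgeSet_bot ▸ hM.1)))]
  omega

lemma HasSparseTriangleCover.of_isolate [Finite V] {K : H.ConnectedComponent}
    (hK : K.HasTriangle) (hXK : X ⊆ K.supp) {U : SimpleGraph V} (hUH : U ≤ H)
    (hU : U.edgeSet.Pairwise fun e f => ∃ v ∈ e, v ∈ f)
    (hUcover : ∀ a b c, H.Adj a b → H.Adj a c → H.Adj b c → a ∈ X ∨ b ∈ X ∨ c ∈ X →
      U.Adj a b ∨ U.Adj a c ∨ U.Adj b c)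
    (hcount : (H.trianglePieces X K).ncard + 3 ≤ (⋃ x ∈ X, H.incidenceSet x).ncard)
    (h : (H.isolate X).HasSparseTriangleCover) : H.HasSparseTriangleCover := by
  obtain ⟨R, hRH, hRcover, hRbound⟩ := h
  refine ⟨U ⊔ R, sup_le hUH (hRH.trans (H.isolate_le X)), fun a b c hab hac hbc => ?_,
    fun M hM => ?_⟩
  · simp only [sup_adj]
    by_cases hX : a ∈ X ∨ b ∈ X ∨ c ∈ X
    · have := hUcover a b c hab hac hbc hX
      tauto
    · simp only [not_or] at hX
      have := hRcover a b c ⟨hab, hX.1, hX.2.1⟩ ⟨hac, hX.1, hX.2.2⟩ ⟨hbc, hX.2.1, hX.2.2⟩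
      tauto
  · obtain ⟨M', hM', hMM'⟩ := hM.exists_card_le_add_one hU
    have := hRbound M' hM'
    have := numTriangleComponents_isolate_add_one_le hK hXK
    have := ncard_edgeSet_isolate_add H X
    omega

lemma ncard_trianglePieces_le [Finite V] {K : H.ConnectedComponent} {x : V} (hx : x ∈ X)
    (hxK : x ∈ K.supp) : (H.trianglePieces X K).ncard ≤
      ((⋃ x ∈ X, H.incidenceSet x) \ {e | ∀ v ∈ e, v ∈ X}).ncard := by
  have hadj : ∀ C ∈ H.trianglePieces X K, ∃ a ∈ C.supp, a ∉ X ∧ ∃ b ∈ X, H.Adj a b :=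
    fun C hC => exists_adj_of_mem_trianglePieces hC hx hxK
  have : Nonempty V := ⟨x⟩
  choose! a haC haX b hbX hab using hadj
  refine Set.ncard_le_ncard_of_injOn (fun C => s(a C, b C)) (fun C hC => ?_)
    (fun C₁ h₁ C₂ h₂ h => ?_)
  · exact ⟨Set.mem_biUnion (hbX C hC) ⟨hab C hC, Sym2.mem_mk_right _ _⟩,
      fun h => haX C hC (h _ (Sym2.mem_mk_left _ _))⟩
  · rcases Sym2.eq_iff.1 h with ⟨h, -⟩ | ⟨h, -⟩
    · rw [← (C₁.mem_supp_iff _).1 (haC C₁ h₁), ← (C₂.mem_supp_iff _).1 (haC C₂ h₂), h]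
    · exact absurd (h ▸ hbX C₂ h₂) (haX C₁ h₁)

def IsClosedTriangle (H : SimpleGraph V) (a b c : V) : Prop :=
  H.Adj a b ∧ H.Adj a c ∧ H.Adj b c ∧
    ∀ x ∈ ({a, b, c} : Set V), ∀ u v, H.Adj x u → H.Adj x v → H.Adj u v →
      u ∈ ({a, b, c} : Set V) ∨ v ∈ ({a, b, c} : Set V)

lemma IsClosedTriangle.hasSparseTriangleCover [Finite V] {a b c : V}
    (hT : H.IsClosedTriangle a b c) (h : (H.isolate {a, b, c}).HasSparseTriangleCover) :
    H.HasSparseTriangleCover := by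
  obtain ⟨hab, hac, hbc, hclosed⟩ := hT
  have hTK : {a, b, c} ⊆ (H.connectedComponentMk a).supp := by
    rintro x (rfl | rfl | rfl)
    exacts [rfl, ConnectedComponent.sound hab.symm.reachable,
      ConnectedComponent.sound hac.symm.reachable]
  refine h.of_isolate (K := H.connectedComponentMk a) ⟨a, b, c, hab, hac, hbc, rfl⟩ hTK
    (U := H.isolate {a, b, c}ᶜ) (H.isolate_le _) ?_ ?_ ?_
  · rintro ⟨x, y⟩ hxy ⟨z, w⟩ hzw hne
    by_contra! hdisj
    simp only [isolate, mem_edgeSet, Set.notMem_compl_iff, Sym2.mem_iff, Set.mem_insert_iff,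
      Set.mem_singleton_iff, forall_eq_or_imp, forall_eq] at hxy hzw hdisj
    have := hxy.1.ne
    have := hzw.1.ne
    grind
  · intro x y z hxy hxz hyz hT
    simp only [isolate, Set.notMem_compl_iff]
    rcases hT with hx | hy | hz
    · have := hclosed x hx y z hxy hxz hyz
      tauto
    · have := hclosed y hy x z hxy.symm hyz hxz
      tauto
    · have := hclosed z hz x y hxz.symm hyz.symm hxy
      tauto
  · have hedges : {s(a, b), s(a, c), s(b, c)} ⊆ (⋃ x ∈ ({a, b, c} : Set V), H.incidenceSet x) ∩
        {e | ∀ v ∈ e, v ∈ ({a, b, c} : Set V)} := by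
      rintro _ (rfl | rfl | rfl)
      exacts [⟨Set.mem_biUnion (x := a) (by simp) ⟨hab, by simp⟩, by simp⟩,
        ⟨Set.mem_biUnion (x := a) (by simp) ⟨hac, by simp⟩, by simp⟩,
        ⟨Set.mem_biUnion (x := b) (by simp) ⟨hbc, by simp⟩, by simp⟩]
    have h3 : ({s(a, b), s(a, c), s(b, c)} : Set (Sym2 V)).ncard = 3 :=
      have := hab.ne; have := hac.ne; have := hbc.ne
      Set.ncard_eq_three.2 ⟨_, _, _, by grind, by grind, by grind, rfl⟩
    have := Set.ncard_le_ncard hedges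
    have := ncard_trianglePieces_le (K := H.connectedComponentMk a)
      (show a ∈ ({a, b, c} : Set V) by simp) rfl
    have := Set.ncard_inter_add_ncard_sdiff_eq_ncard
      (⋃ x ∈ ({a, b, c} : Set V), H.incidenceSet x) {e | ∀ v ∈ e, v ∈ ({a, b, c} : Set V)}
    omega

def IsBowtieCentre (H : SimpleGraph V) (c : V) : Prop :=
  ∃ a b u v, H.Adj c a ∧ H.Adj c b ∧ H.Adj a b ∧ H.Adj c u ∧ H.Adj c v ∧ H.Adj u v ∧
    a ≠ u ∧ a ≠ v ∧ b ≠ u ∧ b ≠ v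

lemma isBowtieCentre_of_not_isClosedTriangle {a b c : V} (hab : H.Adj a b) (hac : H.Adj a c)
    (hbc : H.Adj b c) (h : ¬ H.IsClosedTriangle a b c) :
    H.IsBowtieCentre a ∨ H.IsBowtieCentre b ∨ H.IsBowtieCentre c := by
  simp only [IsClosedTriangle, hab, hac, hbc, true_and, not_forall, not_or] at h
  obtain ⟨x, hx, u, v, hxu, hxv, huv, hu, hv⟩ := h
  simp only [Set.mem_insert_iff, Set.mem_singleton_iff, not_or] at hx hu hv
  rcases hx with rfl | rfl | rfl
  · exact .inl ⟨b, c, u, v, hab, hac, hbc, hxu, hxv, huv, by grind⟩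
  · exact .inr (.inl ⟨a, c, u, v, hab.symm, hbc, hac, hxu, hxv, huv, by grind⟩)
  · exact .inr (.inr ⟨a, b, u, v, hac.symm, hbc.symm, hab, hxu, hxv, huv, by grind⟩)

lemma IsBowtieCentre.four_le_ncard_incidenceSet [Finite V] {c : V} (hc : H.IsBowtieCentre c) :
    4 ≤ (H.incidenceSet c).ncard := by
  obtain ⟨a, b, u, v, hca, hcb, hab, hcu, hcv, huv, hau, hav, hbu, hbv⟩ := hc
  have hsub : {s(c, a), s(c, b), s(c, u), s(c, v)} ⊆ H.incidenceSet c := by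
    rintro _ (rfl | rfl | rfl | rfl) <;> simp [incidenceSet, *]
  have h4 : ({s(c, a), s(c, b), s(c, u), s(c, v)} : Set (Sym2 V)).ncard = 4 :=
    Set.ncard_eq_four.2 ⟨_, _, _, _, mt Sym2.congr_right.1 hab.ne, mt Sym2.congr_right.1 hau,
      mt Sym2.congr_right.1 hav, mt Sym2.congr_right.1 hbu, mt Sym2.congr_right.1 hbv,
      mt Sym2.congr_right.1 huv.ne, rfl⟩
  exact h4 ▸ Set.ncard_le_ncard hsub

lemma IsBowtieCentre.hasSparseTriangleCover [Finite V] {c : V} (hc : H.IsBowtieCentre c)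
    (hpieces : (H.trianglePieces {c} (H.connectedComponentMk c)).ncard ≤ 1)
    (h : (H.isolate {c}).HasSparseTriangleCover) : H.HasSparseTriangleCover := by
  obtain ⟨a, b, -, -, hca, hcb, hab, -⟩ := id hc
  refine h.of_isolate ⟨c, a, b, hca, hcb, hab, rfl⟩ (Set.singleton_subset_iff.2 rfl)
    (U := fromEdgeSet (H.incidenceSet c)) ?_ ?_ ?_ ?_
  · exact fun x y hxy => ((fromEdgeSet_adj _).1 hxy).1.1
  · rw [edgeSet_fromEdgeSet_incidenceSet]
    exact fun e he f hf _ => ⟨c, he.2, hf.2⟩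
  · intro x y z hxy hxz hyz hX
    simp only [Set.mem_singleton_iff] at hX
    simp only [fromEdgeSet_adj, mk'_mem_incidenceSet_iff, hxy, hxz, hyz, hxy.ne, hxz.ne, hyz.ne,
      true_and, ne_eq, not_false_eq_true, and_true]
    tauto
  · rw [Set.biUnion_singleton]
    have := hc.four_le_ncard_incidenceSet
    omega

lemma exists_isBowtieCentre_mem_supp {G : SimpleGraph V} (hG : G ≤ H)
    (hbow : ∀ a b c, H.Adj a b → H.Adj a c → H.Adj b c →
      H.IsBowtieCentre a ∨ H.IsBowtieCentre b ∨ H.IsBowtieCentre c)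
    {C : G.ConnectedComponent} (hC : C.HasTriangle) : ∃ f ∈ C.supp, H.IsBowtieCentre f := by
  obtain ⟨a, b, c, hab, hac, hbc, rfl⟩ := hC
  rcases hbow a b c (hG hab) (hG hac) (hG hbc) with h | h | h
  exacts [⟨a, rfl, h⟩, ⟨b, (ConnectedComponent.connectedComponentMk_eq_of_adj hab).symm, h⟩,
    ⟨c, (ConnectedComponent.connectedComponentMk_eq_of_adj hac).symm, h⟩]

lemma supp_ssubset_of_mem_trianglePieces {c f : V} {C : (H.isolate {c}).ConnectedComponent}
    (hC : C.HasTriangle) (hf : f ∈ C.supp) {B : (H.isolate {f}).ConnectedComponent}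
    (hB : B ∈ H.trianglePieces {f} (H.connectedComponentMk f)) (hcB : c ∉ B.supp) :
    B.supp ⊂ C.supp := by
  have hfc : f ≠ c := fun h => notMem_supp_of_hasTriangle hC rfl (h ▸ hf)
  obtain ⟨a, haB, -, b, hb, hab⟩ := exists_adj_of_mem_trianglePieces hB rfl rfl
  have haf : H.Adj a f := (Set.mem_singleton_iff.1 hb) ▸ hab
  refine Set.ssubset_iff_subset_ne.2
    ⟨fun w hw => ?_, fun h => notMem_supp_of_hasTriangle hB.1 rfl (h ▸ hf)⟩
  have hwa : (H.isolate {c}).Reachable w a :=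
    reachable_isolate_of_mem_supp (H.isolate_le _) (fun v hv (hvc : v = c) => hcB (hvc ▸ hv)) hw haB
  have haf' : (H.isolate {c}).Adj a f := ⟨haf, fun h => hcB (h ▸ haB), hfc⟩
  rw [C.mem_supp_iff] at hf ⊢
  exact (ConnectedComponent.sound (hwa.trans haf'.reachable)).trans hf

lemma exists_isBowtieCentre_ncard_trianglePieces_le_one_of_hasTriangle [Finite V]
    (hbow : ∀ a b c, H.Adj a b → H.Adj a c → H.Adj b c →
      H.IsBowtieCentre a ∨ H.IsBowtieCentre b ∨ H.IsBowtieCentre c)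
    {c : V} {C : (H.isolate {c}).ConnectedComponent} (hC : C.HasTriangle) :
    ∃ f, H.IsBowtieCentre f ∧ (H.trianglePieces {f} (H.connectedComponentMk f)).ncard ≤ 1 := by
  induction hk : C.supp.ncard using Nat.strong_induction_on generalizing c with
  | _ k ih =>
  obtain ⟨f, hfC, hf⟩ := exists_isBowtieCentre_mem_supp (H.isolate_le _) hbow hC
  by_cases hf1 : (H.trianglePieces {f} (H.connectedComponentMk f)).ncard ≤ 1
  · exact ⟨f, hf, hf1⟩
  obtain ⟨B₁, hB₁, B₂, hB₂, hne⟩ := (Set.one_lt_ncard (Set.toFinite _)).1 (not_le.1 hf1)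
  obtain ⟨B, hB, hcB⟩ : ∃ B ∈ H.trianglePieces {f} (H.connectedComponentMk f), c ∉ B.supp := by
    by_contra! h
    exact hne (((B₁.mem_supp_iff c).1 (h B₁ hB₁)).symm.trans ((B₂.mem_supp_iff c).1 (h B₂ hB₂)))
  exact ih _ (hk ▸ Set.ncard_lt_ncard (supp_ssubset_of_mem_trianglePieces hC hfC hB hcB)) hB.1 rfl

lemma exists_isBowtieCentre_ncard_trianglePieces_le_one [Finite V]
    (hbow : ∀ a b c, H.Adj a b → H.Adj a c → H.Adj b c →
      H.IsBowtieCentre a ∨ H.IsBowtieCentre b ∨ H.IsBowtieCentre c)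
    {a b c : V} (hab : H.Adj a b) (hac : H.Adj a c) (hbc : H.Adj b c) :
    ∃ f, H.IsBowtieCentre f ∧ (H.trianglePieces {f} (H.connectedComponentMk f)).ncard ≤ 1 := by
  obtain ⟨f, -, hf⟩ := exists_isBowtieCentre_mem_supp le_rfl hbow
    (C := H.connectedComponentMk a) ⟨a, b, c, hab, hac, hbc, rfl⟩
  by_cases hf1 : (H.trianglePieces {f} (H.connectedComponentMk f)).ncard ≤ 1
  · exact ⟨f, hf, hf1⟩
  obtain ⟨C, hC, -⟩ := (Set.one_lt_ncard (Set.toFinite _)).1 (not_le.1 hf1)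
  exact exists_isBowtieCentre_ncard_trianglePieces_le_one_of_hasTriangle hbow hC.1

theorem hasSparseTriangleCover [Finite V] (H : SimpleGraph V) : H.HasSparseTriangleCover := by
  induction hk : H.edgeSet.ncard using Nat.strong_induction_on generalizing H with
  | _ k ih =>
  by_cases htri : ∃ a b c, H.Adj a b ∧ H.Adj a c ∧ H.Adj b c
  · obtain ⟨a, b, c, hab, hac, hbc⟩ := htri
    by_cases hclosed : ∃ a b c, H.IsClosedTriangle a b c
    · obtain ⟨x, y, z, hT⟩ := hclosed
      exact hT.hasSparseTriangleCover (ih _ (hk ▸ ncard_edgeSet_isolate_lt (by simp) hT.1) _ rfl)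
    · obtain ⟨f, hf, hf1⟩ := exists_isBowtieCentre_ncard_trianglePieces_le_one
        (fun a b c hab hac hbc => isBowtieCentre_of_not_isClosedTriangle hab hac hbc
          fun hT => hclosed ⟨a, b, c, hT⟩) hab hac hbc
      obtain ⟨a, -, -, -, hfa, -⟩ := id hf
      exact hf.hasSparseTriangleCover hf1 (ih _ (hk ▸ ncard_edgeSet_isolate_lt rfl hfa) _ rfl)
  · push Not at htri
    exact hasSparseTriangleCover_of_forall_not_adj htri

theorem Connected.le_ncard_edgeSet_of_arrows [Finite V] {G : SimpleGraph V} (hG : G.Connected)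
    {n : ℕ} (h : Arrows G (Matching n) (cycleGraph 3)) : 4 * n - 1 ≤ G.edgeSet.ncard := by
  obtain ⟨R, hRG, hcover, hbound⟩ := G.hasSparseTriangleCover
  have hq : G.numTriangleComponents ≤ 1 :=
    have := hG.preconnected.subsingleton_connectedComponent
    Set.ncard_le_one_of_subsingleton _
  rcases h R hRG with hred | hblue
  · obtain ⟨M, hM, rfl⟩ := hred.exists_isEdgeMatching
    have := hbound M hM
    omega
  · exact absurd hblue hcover.not_containsCopy_sdiff

end SimpleGraph

/-- For all positive integers `n`, the connected size Ramsey number of `nK₂`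
versus the triangle `C₃` equals `4n−1`: there is a connected graph with exactly `4n−1` edges
arrowing `(nK₂, C₃)`, and every connected graph arrowing `(nK₂, C₃)` has at least `4n−1`
edges. -/
theorem connected_size_ramsey_matching_triangle (n : ℕ) (hn : 0 < n) :
    (∃ (V : Type) (G : SimpleGraph V), Finite V ∧ G.Connected ∧
        G.edgeSet.ncard = 4 * n - 1 ∧ Arrows G (Matching n) (cycleGraph 3)) ∧
    (∀ (V : Type), Finite V → ∀ G : SimpleGraph V,
        G.Connected → Arrows G (Matching n) (cycleGraph 3) →
        4 * n - 1 ≤ G.edgeSet.ncard) := by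
  obtain ⟨m, rfl⟩ := Nat.exists_eq_add_one.2 hn
  exact ⟨⟨_, triangleChain m, inferInstance, triangleChain_connected m,
      ncard_edgeSet_triangleChain m, triangleChain_arrows m⟩,
    fun V _ G hG h => hG.le_ncard_edgeSet_of_arrows h⟩
end

section
/- For every positive integer n and every integer ℓ with 3 ≤ ℓ ≤ ⌊(5n−3)/2⌋, the cycle Cℓ on ℓ vertices satisfies Cℓ ↛ (nK₂, P₃): there is a red-blue colouring of the edges of Cℓ (colouring edges consecutively along the cycle, alternately two red and one blue) that contains neither a red matching with n edges nor a blue path on 3 vertices. -/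
open SimpleGraph

/-!
Colour the edge `{i, i + 1}` of `Cℓ` blue when `i ≡ 2 (mod 3)` and red otherwise. Blue edges
are never consecutive (the closing edge `{ℓ - 1, 0}` is followed by the red edge `{0, 1}`), so
there is no blue `P₃`. Two red edges starting in the same block `{3j, 3j + 1}` share the vertex
`3j + 1`, so labelling red edges by the block of their start shows that a red matching has at
most `⌈ℓ/3⌉` edges, and `⌈ℓ/3⌉ < n` because `ℓ ≤ ⌊(5n - 3)/2⌋ ≤ 3n - 3` once `ℓ ≥ 3`.
-/

section Containment

variable {V : Type*}

theorem le_of_containsCopy_matching {R : SimpleGraph V} {n k : ℕ} (label : V → V → ℕ)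
    (label_lt : ∀ u v, R.Adj u v → label u v < k)
    (not_disjoint_of_label_eq : ∀ u v u' v', R.Adj u v → R.Adj u' v' →
      label u v = label u' v' → ¬ Disjoint ({u, v} : Set V) {u', v'})
    (h : ContainsCopy R (Matching n)) : n ≤ k := by
  obtain ⟨f, hf⟩ := h
  have hadj (i : Fin n) : R.Adj (f (i, 0)) (f (i, 1)) := f.map_adj ⟨rfl, zero_ne_one⟩
  have hinj :
      Set.InjOn (fun i => label (f (i, 0)) (f (i, 1))) (Finset.univ : Finset (Fin n)) := by
    intro i _ j _ hij
    obtain ⟨x, hi, hj⟩ := Set.not_disjoint_iff.mp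
      (not_disjoint_of_label_eq _ _ _ _ (hadj i) (hadj j) hij)
    obtain ⟨a, rfl⟩ : ∃ a, f (i, a) = x := by rcases hi with rfl | rfl <;> exact ⟨_, rfl⟩
    obtain ⟨b, hb⟩ : ∃ b, f (j, b) = f (i, a) := by rcases hj with h | h <;> exact ⟨_, h.symm⟩
    exact (congrArg Prod.fst (hf hb)).symm
  simpa using Finset.card_le_card_of_injOn _
    (fun i _ => Finset.mem_range.2 (label_lt _ _ (hadj i))) hinj

theorem not_containsCopy_pathGraph_three {B : SimpleGraph V}
    (hB : ∀ v, (B.neighborSet v).Subsingleton) : ¬ ContainsCopy B (pathGraph 3) := by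
  rintro ⟨f, hf⟩
  have h10 : B.Adj (f 1) (f 0) := f.map_adj (by simp [pathGraph_adj])
  have h12 : B.Adj (f 1) (f 2) := f.map_adj (by simp [pathGraph_adj])
  exact absurd (hf (hB (f 1) h10 h12)) (by decide)

end Containment

section CycleColouring

variable {k : ℕ}

def cycleRed (k : ℕ) : SimpleGraph (Fin (k + 3)) :=
  fromRel fun u v => v = u + 1 ∧ u.val % 3 ≠ 2

theorem cycleRed_le_cycleGraph : cycleRed k ≤ cycleGraph (k + 3) := by
  rintro u v ⟨-, ⟨rfl, -⟩ | ⟨rfl, -⟩⟩ <;> simp [cycleGraph_adj]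

theorem cycleBlue_adj_cases {u v : Fin (k + 3)} (h : (cycleGraph (k + 3) \ cycleRed k).Adj u v) :
    (v = u + 1 ∧ u.val % 3 = 2) ∨ (u = v + 1 ∧ v.val % 3 = 2) := by
  obtain ⟨huv, hred⟩ := h
  simp only [cycleRed, fromRel_adj, not_and, not_or] at hred
  rcases cycleGraph_adj.mp huv with h | h <;> rw [sub_eq_iff_eq_add'] at h
  · exact .inr ⟨h, by simpa using (hred huv.ne).2 h⟩
  · exact .inl ⟨h, by simpa using (hred huv.ne).1 h⟩

theorem val_add_one_mod_three_ne {w : Fin (k + 3)} (hw : w.val % 3 = 2) :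
    (w + 1).val % 3 ≠ 2 := by
  rw [Fin.val_add_one]
  split_ifs <;> omega

theorem cycleBlue_neighborSet_subsingleton (v : Fin (k + 3)) :
    ((cycleGraph (k + 3) \ cycleRed k).neighborSet v).Subsingleton := by
  intro a ha b hb
  rcases cycleBlue_adj_cases ha with ⟨ha, hv⟩ | ⟨ha, ha'⟩ <;>
    rcases cycleBlue_adj_cases hb with ⟨hb, hv'⟩ | ⟨hb, hb'⟩
  · exact ha.trans hb.symm
  · exact absurd (by rwa [← hb]) (val_add_one_mod_three_ne hb')
  · exact absurd (by rwa [← ha]) (val_add_one_mod_three_ne ha')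
  · exact add_right_cancel (ha.symm.trans hb)

theorem self_ne_add_one_add_one (v : Fin (k + 3)) : v ≠ v + 1 + 1 := by
  rw [add_assoc, ne_eq, left_eq_add, Fin.ext_iff]
  simp [Fin.val_add, Nat.mod_eq_of_lt (show 2 < k + 3 by omega)]

def cycleEdgeStart (u v : Fin (k + 3)) : Fin (k + 3) :=
  if v = u + 1 then u else v

theorem cycleEdgeStart_spec_of_cycleRed_adj {u v : Fin (k + 3)} (h : (cycleRed k).Adj u v) :
    (cycleEdgeStart u v).val % 3 ≠ 2 ∧
      ({u, v} : Set (Fin (k + 3))) = {cycleEdgeStart u v, cycleEdgeStart u v + 1} := by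
  obtain ⟨-, ⟨rfl, hu⟩ | ⟨rfl, hv⟩⟩ := h
  · simp [cycleEdgeStart, hu]
  · simp [cycleEdgeStart, self_ne_add_one_add_one, hv, Set.pair_comm]

theorem not_disjoint_of_div_three_eq {w w' : Fin (k + 3)} (hw : w.val % 3 ≠ 2)
    (hw' : w'.val % 3 ≠ 2) (h : w.val / 3 = w'.val / 3) :
    ¬ Disjoint ({w, w + 1} : Set (Fin (k + 3))) {w', w' + 1} := by
  rw [Set.not_disjoint_iff]
  have hsucc {a b : Fin (k + 3)} (hab : a.val + 1 = b.val) : a + 1 = b :=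
    Fin.ext (by rw [Fin.val_add_one_of_lt' (by omega)]; exact hab)
  rcases (by omega : w.val = w'.val ∨ w.val + 1 = w'.val ∨ w'.val + 1 = w.val) with h | h | h
  · exact ⟨w, by simp, by simp [Fin.ext h]⟩
  · exact ⟨w', by simp [hsucc h], by simp⟩
  · exact ⟨w, by simp, by simp [hsucc h]⟩

theorem le_of_containsCopy_cycleRed_matching {n : ℕ}
    (h : ContainsCopy (cycleRed k) (Matching n)) : n ≤ (k + 5) / 3 := by
  refine le_of_containsCopy_matching (fun u v => (cycleEdgeStart u v).val / 3)
    (fun u v _ => by have := (cycleEdgeStart u v).isLt; omega) ?_ h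
  intro u v u' v' huv huv' heq
  obtain ⟨hs, hset⟩ := cycleEdgeStart_spec_of_cycleRed_adj huv
  obtain ⟨hs', hset'⟩ := cycleEdgeStart_spec_of_cycleRed_adj huv'
  rw [hset, hset']
  exact not_disjoint_of_div_three_eq hs hs' heq

end CycleColouring

theorem cycle_not_arrows_matching_path3_general (n ℓ : ℕ) (h3 : 3 ≤ ℓ)
    (hℓ : ℓ ≤ (5 * n - 3) / 2) :
    ¬ Arrows (cycleGraph ℓ) (Matching n) (pathGraph 3) := by
  obtain ⟨k, rfl⟩ : ∃ k, ℓ = k + 3 := ⟨ℓ - 3, by omega⟩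
  intro hArrows
  rcases hArrows (cycleRed k) cycleRed_le_cycleGraph with hred | hblue
  · have := le_of_containsCopy_cycleRed_matching hred
    omega
  · exact not_containsCopy_pathGraph_three cycleBlue_neighborSet_subsingleton hblue

/-- For every positive integer `n` and every `ℓ` with
`3 ≤ ℓ ≤ ⌊(5n−3)/2⌋`, the cycle `Cℓ` does not arrow `(nK₂, P₃)`. -/
theorem cycle_not_arrows_matching_path3 (n ℓ : ℕ) (hn : 0 < n) (h3 : 3 ≤ ℓ)
    (hℓ : ℓ ≤ (5 * n - 3) / 2) :
    ¬ Arrows (cycleGraph ℓ) (Matching n) (pathGraph 3) :=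
  cycle_not_arrows_matching_path3_general n ℓ h3 hℓ
end
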